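/- There is no 3-element extreme subset of ZMod 10 containing 0; consequently, no 6-element subset of ZMod 10 containing 0 can be written as A + H where A is a 3-element extreme set and H is a 2-element coset. -/

import Mathlib

/-!
If for some shift `d ≠ 0` there is exactly one `x ∈ E` with `x - d ∈ E`, the autocorrelation
at `d` of any `f` supported on `E` is a single unimodular term, hence nonzero, so `E` is not
extreme. A finite check shows that every 3-element subset of `ZMod 10` has such a shift; the
second claim follows because `A` would be a 3-element extreme set.
-/

open Complex Finset Pointwise

/-- A finite subset `E` of `ZMod n` is extreme if there is a function supported
on `E`, unimodular on `E`, with vanishing autocorrelation at nonzero shifts. -/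
def IsExtremeSet {n : ℕ} [NeZero n] (E : Finset (ZMod n)) : Prop :=
  ∃ f : ZMod n → ℂ,
    (∀ x ∈ E, ‖f x‖ = 1) ∧ (∀ x ∉ E, f x = 0) ∧
    ∀ d : ZMod n, d ≠ 0 → ∑ x : ZMod n, f x * (starRingEnd ℂ) (f (x - d)) = 0

theorem IsExtremeSet.card_filter_sub_mem_ne_one {n : ℕ} [NeZero n] {E : Finset (ZMod n)}
    (hE : IsExtremeSet E) {d : ZMod n} (hd : d ≠ 0) :
    (E.filter (fun x => x - d ∈ E)).card ≠ 1 := by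
  obtain ⟨f, hunit, hsupp, hcorr⟩ := hE
  intro hcard
  obtain ⟨x₀, hx₀⟩ := card_eq_one.mp hcard
  have hx₀mem : x₀ ∈ E ∧ x₀ - d ∈ E := mem_filter.mp (hx₀ ▸ mem_singleton_self x₀)
  have hsum : ∑ x : ZMod n, f x * starRingEnd ℂ (f (x - d))
      = ∑ x ∈ E.filter (fun x => x - d ∈ E), f x * starRingEnd ℂ (f (x - d)) := by
    refine (sum_subset (subset_univ _) fun x _ hx => ?_).symm
    by_cases hxE : x ∈ E
    · rw [hsupp _ fun h => hx (mem_filter.mpr ⟨hxE, h⟩), map_zero, mul_zero]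
    · rw [hsupp _ hxE, zero_mul]
  have hterm : ‖f x₀ * starRingEnd ℂ (f (x₀ - d))‖ = 1 := by
    rw [norm_mul, Complex.norm_conj, hunit _ hx₀mem.1, hunit _ hx₀mem.2, mul_one]
  have hzero := hcorr d hd
  rw [hsum, hx₀, sum_singleton] at hzero
  rw [hzero, norm_zero] at hterm
  exact zero_ne_one hterm

theorem ZMod.ten_exists_unique_difference_of_card_eq_three {E : Finset (ZMod 10)}
    (hE : E.card = 3) : ∃ d : ZMod 10, d ≠ 0 ∧ (E.filter (fun x => x - d ∈ E)).card = 1 := by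
  obtain ⟨a, b, c, hab, hac, hbc, rfl⟩ := card_eq_three.mp hE
  revert a b c
  decide

theorem ZMod.ten_not_isExtremeSet_of_card_eq_three {E : Finset (ZMod 10)} (hE : E.card = 3) :
    ¬ IsExtremeSet E := fun hext =>
  let ⟨_, hd, hcard⟩ := ZMod.ten_exists_unique_difference_of_card_eq_three hE
  hext.card_filter_sub_mem_ne_one hd hcard

theorem no_three_element_extreme_in_zmod10 :
    (∀ E : Finset (ZMod 10), E.card = 3 → (0 : ZMod 10) ∈ E → ¬ IsExtremeSet E) ∧
    (∀ S : Finset (ZMod 10), S.card = 6 → (0 : ZMod 10) ∈ S →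
      ¬ ∃ (A H : Finset (ZMod 10)), A.card = 3 ∧ IsExtremeSet A ∧ H.card = 2 ∧
          (∃ (t : ZMod 10) (K : AddSubgroup (ZMod 10)),
            (H : Set (ZMod 10)) = (fun k => t + k) '' (K : Set (ZMod 10))) ∧
          S = A + H) := by
  refine ⟨fun E hE _ => ZMod.ten_not_isExtremeSet_of_card_eq_three hE, ?_⟩
  rintro S - - ⟨A, -, hA, hext, -⟩
  exact ZMod.ten_not_isExtremeSet_of_card_eq_three hA hext
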